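/- arXiv:1602.04747 — 3 statements merged into one kernel-verified Lean document; each statement's English description precedes it below -/
import Mathlib

section
/- Let n ≥ 1 and let m ≥ 2 be a natural number with prime factorization m = ∏_i p_i^{k_i}. Then the number of n×n matrices over ℤ/mℤ that are invertible modulo m equals ∏_i ( p_i^{(k_i − 1)·n²} · ∏_{j=0}^{n−1} (p_i^n − p_i^j) ). Equivalently, the cardinality of the general linear group GL(n, ℤ/mℤ) is ∏_{p ∣ m prime} p^{(v_p(m) − 1)·n²} · ∏_{j=0}^{n−1} (p^n − p^j), where v_p(m) is the p-adic valuation of m. -/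
/-!
Reduction modulo `p` is a surjective ring map `ZMod (p ^ k) → ZMod p` under which an element is a
unit exactly when its image is, and the same holds for the induced map on matrices because
units are detected by the determinant. Invertible matrices are therefore the preimage of
`GL n (ZMod p)` under an additive surjection with kernel of size `p ^ ((k - 1) n²)`, and the
count over the field `ZMod p` is the classical one. The Chinese remainder theorem makes
`m ↦ |GL n (ZMod m)|` multiplicative, which assembles the prime-power counts.
-/

open Matrix

theorem AddMonoidHom.card_preimage_of_surjective {A B : Type*} [AddGroup A] [AddGroup B]
    (g : A →+ B) (hg : Function.Surjective g) (t : Set B) :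
    Nat.card (g ⁻¹' t) = Nat.card g.ker * Nat.card t := by
  let s := Function.surjInv hg
  have hs : ∀ y, g (s y) = y := Function.surjInv_eq hg
  rw [← Nat.card_prod]
  exact Nat.card_congr
    { toFun := fun x => (⟨x - s (g x), by simp [hs]⟩, ⟨g x, x.2⟩)
      invFun := fun ky => ⟨ky.1 + s ky.2, by
        rw [Set.mem_preimage, map_add, g.mem_ker.1 ky.1.2, zero_add, hs]
        exact ky.2.2⟩
      left_inv := fun x => by simp
      right_inv := fun ky => by ext <;> simp [g.mem_ker.1 ky.1.2, hs] }

theorem Nat.card_units_mul_card_eq_of_isLocalHom {R S : Type*} [Ring R] [Ring S] (f : R →+* S)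
    [IsLocalHom f] (hf : Function.Surjective f) :
    Nat.card Rˣ * Nat.card S = Nat.card R * Nat.card Sˣ := by
  have hcard : Nat.card R = Nat.card (f : R →+ S).ker * Nat.card S := by
    simpa using (f : R →+ S).card_preimage_of_surjective hf Set.univ
  have hunits : Nat.card Rˣ = Nat.card (f : R →+ S).ker * Nat.card Sˣ := by
    have hpre : (f : R →+ S) ⁻¹' Set.range (Units.val : Sˣ → S) =
        Set.range (Units.val : Rˣ → R) := Set.ext fun x => isUnit_map_iff f x
    have h := (f : R →+ S).card_preimage_of_surjective hf (Set.range (Units.val : Sˣ → S))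
    rwa [hpre, Nat.card_range_of_injective Units.val_injective,
      Nat.card_range_of_injective Units.val_injective] at h
  rw [hcard, hunits]
  ring

instance RingHom.isLocalHom_mapMatrix {R S : Type*} [CommRing R] [CommRing S] (f : R →+* S)
    [IsLocalHom f] {n : Type*} [Fintype n] [DecidableEq n] :
    IsLocalHom (f.mapMatrix : Matrix n n R →+* Matrix n n S) where
  map_nonunit A hA := by
    rw [Matrix.isUnit_iff_isUnit_det, ← RingHom.map_det] at hA
    exact (Matrix.isUnit_iff_isUnit_det A).2 (isUnit_of_map_unit f _ hA)

theorem RingHom.mapMatrix_surjective {R S : Type*} [Semiring R] [Semiring S] {f : R →+* S}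
    (hf : Function.Surjective f) {n : Type*} [Fintype n] [DecidableEq n] :
    Function.Surjective (f.mapMatrix : Matrix n n R →+* Matrix n n S) :=
  fun B => ⟨B.map (Function.surjInv hf), by ext; simp [Function.surjInv_eq hf]⟩

theorem ZMod.isLocalHom_castHom_pow {p k : ℕ} [NeZero p] (hk : k ≠ 0) :
    IsLocalHom (ZMod.castHom (dvd_pow_self p hk) (ZMod p)) where
  map_nonunit x hx := by
    rw [← ZMod.natCast_zmod_val x, map_natCast, ZMod.isUnit_iff_coprime] at hx
    rw [← ZMod.natCast_zmod_val x, ZMod.isUnit_iff_coprime]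
    exact hx.pow_right k

theorem Nat.card_matrix (m n α : Type*) [Finite m] [Finite n] :
    Nat.card (Matrix m n α) = Nat.card α ^ (Nat.card m * Nat.card n) := by
  rw [Matrix, Nat.card_fun, Nat.card_fun, ← pow_mul, mul_comm]

theorem Matrix.card_GL_zmod_prime_pow {p k : ℕ} (hp : p.Prime) (hk : k ≠ 0) (n : ℕ) :
    Nat.card (GL (Fin n) (ZMod (p ^ k))) =
      p ^ ((k - 1) * n ^ 2) * ∏ j ∈ Finset.range n, (p ^ n - p ^ j) := by
  have := Fact.mk hp
  have := ZMod.isLocalHom_castHom_pow (p := p) hk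
  have h := Nat.card_units_mul_card_eq_of_isLocalHom
    ((ZMod.castHom (dvd_pow_self p hk) (ZMod p)).mapMatrix (m := Fin n))
    (RingHom.mapMatrix_surjective (ZMod.ringHom_surjective _))
  have hpow : (p ^ k) ^ (n * n) = p ^ ((k - 1) * n ^ 2) * p ^ (n * n) := by
    rw [← pow_mul, ← pow_add]
    congr 1
    obtain ⟨k, rfl⟩ := Nat.exists_eq_add_one_of_ne_zero hk
    rw [Nat.add_sub_cancel]
    ring
  rw [Nat.card_matrix, Nat.card_matrix, Nat.card_zmod, Nat.card_zmod, Nat.card_fin] at h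
  rw [hpow, mul_right_comm, Nat.mul_left_inj (pow_ne_zero _ hp.ne_zero)] at h
  rw [h, card_GL_field, ZMod.card, Fin.prod_univ_eq_prod_range (fun j => p ^ n - p ^ j) n]

theorem Matrix.card_GL_prod (n R S : Type*) [Fintype n] [DecidableEq n] [Semiring R]
    [Semiring S] :
    Nat.card (GL n (R × S)) = Nat.card (GL n R) * Nat.card (GL n S) := by
  let e : Matrix n n (R × S) ≃+* Matrix n n R × Matrix n n S :=
    RingEquiv.ofBijective ((RingHom.fst R S).mapMatrix.prod (RingHom.snd R S).mapMatrix)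
      ⟨fun A B h => by ext i j <;> simp_all [Prod.ext_iff, ← Matrix.ext_iff],
        fun P => ⟨Matrix.of fun i j => (P.1 i j, P.2 i j), rfl⟩⟩
  rw [← Nat.card_prod]
  exact Nat.card_congr ((Units.mapEquiv e.toMulEquiv).trans MulEquiv.prodUnits).toEquiv

theorem Matrix.card_GL_zmod_mul_of_coprime (n : Type*) [Fintype n] [DecidableEq n] {a b : ℕ}
    (h : a.Coprime b) :
    Nat.card (GL n (ZMod (a * b))) = Nat.card (GL n (ZMod a)) * Nat.card (GL n (ZMod b)) := by
  rw [Nat.card_congr (Units.mapEquiv (ZMod.chineseRemainder h).mapMatrix.toMulEquiv).toEquiv,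
    card_GL_prod]

theorem hill_keyspace_size_general (n m : ℕ) (hm : 2 ≤ m) :
    Nat.card (GL (Fin n) (ZMod m)) =
      ∏ p ∈ m.primeFactors,
        p ^ ((m.factorization p - 1) * n ^ 2) *
          ∏ j ∈ Finset.range n, (p ^ n - p ^ j) := by
  have hm0 : m ≠ 0 := by omega
  rw [Nat.multiplicative_factorization (fun m => Nat.card (GL (Fin n) (ZMod m)))
    (fun _ _ => card_GL_zmod_mul_of_coprime (Fin n)) (by simp) hm0,
    Finsupp.prod, Nat.support_factorization]
  refine Finset.prod_congr rfl fun p hp =>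
    card_GL_zmod_prime_pow (Nat.prime_of_mem_primeFactors hp)
      (Finsupp.mem_support_iff.mp (by rwa [Nat.support_factorization])) n

/-- Overbey–Traves–Wojdylo Hill cipher keyspace size theorem: for `m ≥ 2` with prime
factorization `m = ∏ p^(v_p m)`, the number of invertible `n × n` matrices over `ℤ/mℤ` is
`∏_{p ∣ m prime} p^((v_p(m) − 1)·n²) · ∏_{j=0}^{n−1} (p^n − p^j)`. -/
theorem hill_keyspace_size (n m : ℕ) (hn : 1 ≤ n) (hm : 2 ≤ m) :
    Nat.card (GL (Fin n) (ZMod m)) =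
      ∏ p ∈ m.primeFactors,
        p ^ ((m.factorization p - 1) * n ^ 2) *
          ∏ j ∈ Finset.range n, (p ^ n - p ^ j) :=
  hill_keyspace_size_general n m hm
end

section
/- Let K, P, C be finite types, let pK : K → ℝ and pP : P → ℝ be probability distributions, and let e : K → P → C be an encryption rule such that e(k) : P → C is injective for every key k ∈ K. Define the joint distribution q on K × P by q(k, p) = pK(k)·pP(p), the ciphertext distribution pC on C by pC(c) = ∑_{(k,p) : e(k)(p) = c} q(k, p), and the joint key–ciphertext distribution r on K × C by r(k, c) = ∑_{p : e(k)(p) = c} q(k, p). Then the key equivocation H(K | C) := H(r) − H(pC) satisfies H(K | C) = H(pK) + H(pP) − H(pC). -/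
/-- The Shannon entropy (base 2) of a probability distribution on a finite type, with the
convention `0 · log₂ 0 = 0` (automatic since `Real.logb 2 0 = 0`). -/
noncomputable def shannonEntropy {α : Type*} [Fintype α] (p : α → ℝ) : ℝ :=
  -∑ a, p a * Real.logb 2 (p a)

/-! Since every encryption rule is injective, `(k, p) ↦ (k, e k p)` is injective and `r` is
just `q` transported along it (and zero off its range), so `H(r) = H(q)`. As `q` is a product
distribution, `H(q) = H(pK) + H(pP)` by additivity of `x ↦ -x log x` over products. -/

open Finset Real

theorem shannonEntropy_eq_sum_negMulLog_div {α : Type*} [Fintype α] (p : α → ℝ) :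
    shannonEntropy p = (∑ a, negMulLog (p a)) / log 2 := by
  simp only [shannonEntropy, negMulLog, logb, sum_div]
  rw [← sum_neg_distrib]
  exact sum_congr rfl fun a _ => by ring

theorem shannonEntropy_mul {α β : Type*} [Fintype α] [Fintype β] (f : α → ℝ) (g : β → ℝ)
    (hf : ∑ a, f a = 1) (hg : ∑ b, g b = 1) :
    shannonEntropy (fun x : α × β => f x.1 * g x.2) = shannonEntropy f + shannonEntropy g := by
  simp only [shannonEntropy_eq_sum_negMulLog_div, ← add_div, Fintype.sum_prod_type,
    negMulLog_mul, sum_add_distrib, ← sum_mul, ← mul_sum, hf, hg, one_mul]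

theorem shannonEntropy_of_injective {α β : Type*} [Fintype α] [Fintype β] {i : α → β}
    (hi : Function.Injective i) {f : α → ℝ} {g : β → ℝ} (hg : ∀ b ∉ Set.range i, g b = 0)
    (hgf : ∀ a, g (i a) = f a) : shannonEntropy g = shannonEntropy f := by
  unfold shannonEntropy
  congr 1
  exact (Fintype.sum_of_injective i hi _ _ (fun b hb => by simp [hg b hb]) fun a => by
    rw [hgf]).symm

theorem sum_filter_eq_apply_of_injective {α β : Type*} [Fintype α] [DecidableEq β] {f : α → β}
    (hf : Function.Injective f) (w : α → ℝ) (a : α) :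
    ∑ x ∈ univ.filter (fun x => f x = f a), w x = w a := by
  rw [show univ.filter (fun x => f x = f a) = {a} by ext; simp [hf.eq_iff], sum_singleton]

theorem sum_filter_eq_zero_of_notMem_range {α β : Type*} [Fintype α] [DecidableEq β]
    {f : α → β} {b : β} (hb : b ∉ Set.range f) (w : α → ℝ) :
    ∑ x ∈ univ.filter (fun x => f x = b), w x = 0 :=
  sum_eq_zero fun x hx => absurd ⟨x, (mem_filter.1 hx).2⟩ hb

theorem key_equivocation_identity_general {K P C : Type*} [Fintype K] [Fintype P] [Fintype C]
    [DecidableEq C]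
    (pK : K → ℝ) (hK1 : ∑ k, pK k = 1)
    (pP : P → ℝ) (hP1 : ∑ p, pP p = 1)
    (e : K → P → C) (he : ∀ k, Function.Injective (e k))
    (q : K × P → ℝ) (hq : ∀ x, q x = pK x.1 * pP x.2)
    (pC : C → ℝ)
    (r : K × C → ℝ)
    (hr : ∀ k c, r (k, c) = ∑ p ∈ Finset.univ.filter (fun p : P => e k p = c), q (k, p)) :
    shannonEntropy r - shannonEntropy pC =
      shannonEntropy pK + shannonEntropy pP - shannonEntropy pC := by
  have hencrypt : Function.Injective fun x : K × P => (x.1, e x.1 x.2) := by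
    rintro ⟨k, p⟩ ⟨k', p'⟩ h
    simp only [Prod.mk.injEq] at h
    obtain ⟨rfl, hc⟩ := h
    rw [he k hc]
  have hrq : shannonEntropy r = shannonEntropy q := by
    refine shannonEntropy_of_injective hencrypt ?_ fun x => ?_
    · rintro ⟨k, c⟩ hc
      exact (hr k c).trans <| sum_filter_eq_zero_of_notMem_range
        (fun ⟨p, hp⟩ => hc ⟨(k, p), by simp only [hp]⟩) _
    · exact (hr _ _).trans <| sum_filter_eq_apply_of_injective (he x.1) (fun p => q (x.1, p)) x.2
  rw [hrq, funext hq, shannonEntropy_mul pK pP hK1 hP1]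

/-- Key equivocation identity (Eq. (8) of the paper): for a cryptosystem with injective
encryption rules and independently drawn key and plaintext,
`H(K | C) = H(r) − H(pC) = H(pK) + H(pP) − H(pC)`. -/
theorem key_equivocation_identity {K P C : Type*} [Fintype K] [Fintype P] [Fintype C]
    [DecidableEq C]
    (pK : K → ℝ) (hK0 : ∀ k, 0 ≤ pK k) (hK1 : ∑ k, pK k = 1)
    (pP : P → ℝ) (hP0 : ∀ p, 0 ≤ pP p) (hP1 : ∑ p, pP p = 1)
    (e : K → P → C) (he : ∀ k, Function.Injective (e k))
    (q : K × P → ℝ) (hq : ∀ x, q x = pK x.1 * pP x.2)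
    (pC : C → ℝ)
    (hpC : ∀ c, pC c = ∑ x ∈ Finset.univ.filter (fun x : K × P => e x.1 x.2 = c), q x)
    (r : K × C → ℝ)
    (hr : ∀ k c, r (k, c) = ∑ p ∈ Finset.univ.filter (fun p : P => e k p = c), q (k, p)) :
    shannonEntropy r - shannonEntropy pC =
      shannonEntropy pK + shannonEntropy pP - shannonEntropy pC :=
  key_equivocation_identity_general pK hK1 pP hP1 e he q hq pC r hr
end

section
/- Let K, P, C be finite types, let pK : K → ℝ and pP : P → ℝ be probability distributions, and let e : K → P → C be an encryption rule such that e(k) : P → C is injective for every k ∈ K. With q, pC, r and the key equivocation H(K | C) = H(r) − H(pC) defined as in the key-equivocation identity, if the plaintext and ciphertext entropies coincide, H(pP) = H(pC), then the key equivocation equals the full key entropy: H(K | C) = H(pK). -/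
/-! Since each `e k` is injective, `(k, p) ↦ (k, e k p)` maps the joint law `q` of key and
plaintext bijectively onto the support of the joint law `r` of key and ciphertext, so
`H(r) = H(q)`; by independence `H(q) = H(pK) + H(pP)`, and `H(pP) = H(pC)` finishes. -/

open Finset Real

theorem shannonEntropy_comp_of_injective {α β : Type*} [Fintype α] [Fintype β] {f : α → β}
    (hf : Function.Injective f) (p : β → ℝ) (hp : ∀ b ∉ Set.range f, p b = 0) :
    shannonEntropy (p ∘ f) = shannonEntropy p := by
  simp only [shannonEntropy, neg_inj]
  exact Fintype.sum_of_injective f hf _ _ (fun b hb => by simp [hp b hb]) fun _ => rfl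

theorem shannonEntropy_prod {α β : Type*} [Fintype α] [Fintype β] (p : α → ℝ) (q : β → ℝ)
    (hp : ∑ a, p a = 1) (hq : ∑ b, q b = 1) :
    shannonEntropy (fun x : α × β => p x.1 * q x.2) = shannonEntropy p + shannonEntropy q := by
  simp only [shannonEntropy_eq_sum_negMulLog_div, ← add_div, Fintype.sum_prod_type,
    negMulLog_mul, sum_add_distrib, ← sum_mul, ← mul_sum, hp, hq, one_mul]

theorem sum_filter_apply_eq_apply {α β M : Type*} [Fintype α] [DecidableEq β]
    [AddCommMonoid M] {f : α → β} (hf : Function.Injective f) (g : α → M) (a : α) :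
    ∑ x ∈ univ.filter (fun x => f x = f a), g x = g a := by
  rw [show univ.filter (fun x => f x = f a) = {a} by ext; simp [hf.eq_iff], sum_singleton]

theorem sum_filter_apply_eq_zero {α β M : Type*} [Fintype α] [DecidableEq β]
    [AddCommMonoid M] {f : α → β} (g : α → M) {b : β} (hb : b ∉ Set.range f) :
    ∑ x ∈ univ.filter (fun x => f x = b), g x = 0 :=
  sum_eq_zero fun x hx => absurd ⟨x, (mem_filter.mp hx).2⟩ hb

theorem key_equivocation_eq_key_entropy_general {K P C : Type*} [Fintype K] [Fintype P] [Fintype C]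
    [DecidableEq C]
    (pK : K → ℝ) (hK1 : ∑ k, pK k = 1)
    (pP : P → ℝ) (hP1 : ∑ p, pP p = 1)
    (e : K → P → C) (he : ∀ k, Function.Injective (e k))
    (q : K × P → ℝ) (hq : ∀ x, q x = pK x.1 * pP x.2)
    (pC : C → ℝ)
    (r : K × C → ℝ)
    (hr : ∀ k c, r (k, c) = ∑ p ∈ Finset.univ.filter (fun p : P => e k p = c), q (k, p))
    (hPC : shannonEntropy pP = shannonEntropy pC) :
    shannonEntropy r - shannonEntropy pC = shannonEntropy pK := by
  let encrypt : K × P → K × C := fun x => (x.1, e x.1 x.2)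
  have encrypt_injective : Function.Injective encrypt := fun ⟨k, p⟩ ⟨k', p'⟩ h => by
    obtain ⟨rfl, hc⟩ := Prod.mk.inj h
    exact congrArg (Prod.mk k) (he k hc)
  have hr_encrypt : r ∘ encrypt = q := funext fun x => by
    simp only [Function.comp, encrypt, hr, sum_filter_apply_eq_apply (he x.1)]
  have hr_zero : ∀ y ∉ Set.range encrypt, r y = 0 := fun ⟨k, c⟩ hy => by
    refine (hr k c).trans (sum_filter_apply_eq_zero _ fun ⟨p, hp⟩ => hy ⟨(k, p), ?_⟩)
    simp [encrypt, hp]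
  have hq_eq : q = fun x => pK x.1 * pP x.2 := funext hq
  have joint_entropy : shannonEntropy r = shannonEntropy pK + shannonEntropy pP := by
    rw [← shannonEntropy_comp_of_injective encrypt_injective r hr_zero, hr_encrypt, hq_eq,
      shannonEntropy_prod pK pP hK1 hP1]
  rw [joint_entropy, hPC, add_sub_cancel_right]

/-- Eq. (10) of the paper: if the plaintext and ciphertext entropies coincide (no redundancy
in the plaintext language), then the key equivocation equals the full key entropy:
`H(K | C) = H(r) − H(pC) = H(pK)`. -/
theorem key_equivocation_eq_key_entropy {K P C : Type*} [Fintype K] [Fintype P] [Fintype C]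
    [DecidableEq C]
    (pK : K → ℝ) (hK0 : ∀ k, 0 ≤ pK k) (hK1 : ∑ k, pK k = 1)
    (pP : P → ℝ) (hP0 : ∀ p, 0 ≤ pP p) (hP1 : ∑ p, pP p = 1)
    (e : K → P → C) (he : ∀ k, Function.Injective (e k))
    (q : K × P → ℝ) (hq : ∀ x, q x = pK x.1 * pP x.2)
    (pC : C → ℝ)
    (hpC : ∀ c, pC c = ∑ x ∈ Finset.univ.filter (fun x : K × P => e x.1 x.2 = c), q x)
    (r : K × C → ℝ)
    (hr : ∀ k c, r (k, c) = ∑ p ∈ Finset.univ.filter (fun p : P => e k p = c), q (k, p))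
    (hPC : shannonEntropy pP = shannonEntropy pC) :
    shannonEntropy r - shannonEntropy pC = shannonEntropy pK :=
  key_equivocation_eq_key_entropy_general pK hK1 pP hP1 e he q hq pC r hr hPC
end
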